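/- Every PP-quantale is semiprime: if c^⊥ is complemented for every compact element c, then ρ(0) = 0. -/
import Mathlib


open CompleteLattice

/-- A commutative integral quantale: a complete lattice with a commutative monoid
structure whose unit is the top element, with multiplication distributing over
arbitrary joins. -/
class CommQuantale (A : Type*) extends CompleteLattice A, CommMonoid A where
  one_eq_top : (1 : A) = ⊤
  mul_sSup_distrib : ∀ (a : A) (S : Set A), a * sSup S = ⨆ b ∈ S, a * b

namespace CommQuantale

variable {A : Type*} [CommQuantale A]

/-- m-prime element -/
def MPrime (p : A) : Prop := p < 1 ∧ ∀ a b : A, a * b ≤ p → a ≤ p ∨ b ≤ p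

/-- radical -/
def rad (a : A) : A := sInf {p : A | MPrime p ∧ a ≤ p}

/-- annihilator / negation `c^⊥ = ⋁{x | c·x = 0}` -/
def perp (c : A) : A := sSup {x : A | c * x = ⊥}

/-- residuation `c → b = ⋁{x | c·x ≤ b}` -/
def resid (c b : A) : A := sSup {x : A | c * x ≤ b}

/-- pure element -/
def IsPure (a : A) : Prop :=
  ∀ c : A, IsCompactElement c → c ≤ a → a ⊔ perp c = 1

/-- weakly pure element -/
def IsWPure (a : A) : Prop :=
  ∀ c : A, IsCompactElement c → c ≤ a → a ⊔ resid c (rad ⊥) = 1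

/-- complemented element -/
def IsComplemented (e : A) : Prop := ∃ f : A, e ⊔ f = 1 ∧ e ⊓ f = ⊥

/-- regular element: a join of complemented elements -/
def IsRegular (a : A) : Prop :=
  ∃ S : Set A, (∀ e ∈ S, IsComplemented e) ∧ a = sSup S

/-- Ker operator -/
def Ker (a : A) : A :=
  sSup {d : A | IsCompactElement d ∧ d ≤ a ∧ a ⊔ perp d = 1}

/-- O operator: `O(p) = ⋁{c compact | c^⊥ ≰ p}` -/
def O (p : A) : A := sSup {c : A | IsCompactElement c ∧ ¬ perp c ≤ p}

/-- O operator, as in Section 4: `O(p) = ⋁{d compact | d·e = 0 for some compact e ≰ p}` -/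
def O' (p : A) : A :=
  sSup {d : A | IsCompactElement d ∧ ∃ e : A, IsCompactElement e ∧ ¬ e ≤ p ∧ d * e = ⊥}

/-- algebraic quantale: every element is the join of the compact elements below it -/
def Algebraic (A : Type*) [CommQuantale A] : Prop :=
  ∀ a : A, a = sSup {c : A | IsCompactElement c ∧ c ≤ a}

/-- coherent quantale -/
def Coherent (A : Type*) [CommQuantale A] : Prop :=
  Algebraic A ∧ IsCompactElement (1 : A) ∧
    ∀ c d : A, IsCompactElement c → IsCompactElement d → IsCompactElement (c * d)

end CommQuantale

open CommQuantale

section Proof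

variable {A : Type*} [CommQuantale A]

private lemma my_mul_sup (a b c : A) : a * (b ⊔ c) = a * b ⊔ a * c := by
  have := CommQuantale.mul_sSup_distrib a {b, c}
  rw [sSup_pair, iSup_pair] at this
  exact this

private lemma my_mul_mono {b c : A} (a : A) (h : b ≤ c) : a * b ≤ a * c := by
  have : a * c = a * b ⊔ a * c := by rw [← my_mul_sup, sup_eq_right.mpr h]
  rw [this]; exact le_sup_left

private lemma my_mul_le_left (a b : A) : a * b ≤ a := by
  have h : a * b ≤ a * 1 := my_mul_mono a (by rw [CommQuantale.one_eq_top]; exact le_top)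
  simpa using h

private lemma my_mul_le_right (a b : A) : a * b ≤ b := by
  rw [mul_comm]; exact my_mul_le_left b a

private lemma my_pow_compact (hcoh : Coherent A) {c : A} (hc : IsCompactElement c) :
    ∀ n : ℕ, IsCompactElement (c ^ (n + 1)) := by
  intro n
  induction n with
  | zero => simpa using hc
  | succ k ih => rw [pow_succ]; exact hcoh.2.2 _ _ ih hc

/-- nilpotent compact implies bot, from PP -/
private lemma my_nilp (hcoh : Coherent A)
    (hPP : ∀ c : A, IsCompactElement c → CommQuantale.IsComplemented (perp c)) :
    ∀ n : ℕ, ∀ c : A, IsCompactElement c → c ^ (n + 1) = ⊥ → c = ⊥ := by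
  intro n
  induction n with
  | zero => intro c _ h; simpa using h
  | succ k ih =>
    intro c hc h
    -- d = c^(k+1), d*d ≤ c^(k+2) = ⊥
    set d := c ^ (k + 1) with hd
    have hdc : IsCompactElement d := my_pow_compact hcoh hc k
    have hdd : d * d = ⊥ := by
      have h1 : d * d ≤ c ^ (k + 2) := by
        have : d * d = c ^ (k + 2) * c ^ k := by
          rw [hd, ← pow_add, ← pow_add]; ring_nf
        rw [this]; exact my_mul_le_left _ _
      rw [h] at h1
      exact le_bot_iff.mp h1
    -- then d ≤ perp d, and d * perp d = ⊥, and perp d complemented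
    have hdp : d ≤ perp d := le_sSup hdd
    have hdperp : d * perp d = ⊥ := by
      rw [perp, CommQuantale.mul_sSup_distrib]
      apply le_bot_iff.mp
      apply iSup_le; intro x; apply iSup_le; intro hx; exact le_of_eq hx
    obtain ⟨f, hf1, hf2⟩ := hPP d hdc
    have hdle : d ≤ f := by
      have : d * (perp d ⊔ f) = d := by rw [hf1]; simp
      rw [my_mul_sup, hdperp, bot_sup_eq] at this
      rw [← this]; exact my_mul_le_right _ _
    have : d = ⊥ := le_bot_iff.mp (by rw [← hf2]; exact le_inf hdp hdle)
    exact ih c hc this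

private lemma my_exists_mprime (hcoh : Coherent A) {c : A} (hc : IsCompactElement c)
    (hnil : ∀ n : ℕ, c ^ (n + 1) ≠ ⊥) :
    ∃ p : A, MPrime p ∧ ¬ c ≤ p := by
  set S : Set A := {p : A | ∀ n : ℕ, ¬ c ^ (n + 1) ≤ p} with hS
  have hbot : (⊥ : A) ∈ S := by
    intro n h; exact hnil n (le_bot_iff.mp h)
  have chain : ∀ C ⊆ S, IsChain (· ≤ ·) C → ∀ y ∈ C, ∃ ub ∈ S, ∀ z ∈ C, z ≤ ub := by
    intro C hCS hchain y hy
    refine ⟨sSup C, ?_, fun z hz => le_sSup hz⟩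
    intro n h
    have hcomp := my_pow_compact hcoh hc n
    rw [isCompactElement_iff_le_of_directed_sSup_le] at hcomp
    obtain ⟨x, hxC, hx⟩ := hcomp C ⟨y, hy⟩ (hchain.directedOn) h
    exact hCS hxC n hx
  obtain ⟨m, _, hmS, hmax⟩ := zorn_le_nonempty₀ S chain ⊥ hbot
  · refine ⟨m, ⟨?_, ?_⟩, fun h => hmS 0 (by simpa using h)⟩
    · rw [CommQuantale.one_eq_top]
      refine lt_top_iff_ne_top.mpr fun h => hmS 0 ?_
      rw [h]; exact le_top
    · intro a b hab
      by_contra hcon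
      push_neg at hcon
      obtain ⟨ha, hb⟩ := hcon
      have hma : m ⊔ a ∉ S := fun h => ha (le_sup_right.trans (hmax h le_sup_left))
      have hmb : m ⊔ b ∉ S := fun h => hb (le_sup_right.trans (hmax h le_sup_left))
      simp only [hS, Set.mem_setOf_eq, not_forall, not_not] at hma hmb
      obtain ⟨i, hi⟩ := hma
      obtain ⟨j, hj⟩ := hmb
      apply hmS (i + j + 1)
      have h1 : c ^ (i + j + 2) = c ^ (i + 1) * c ^ (j + 1) := by
        rw [← pow_add]; ring_nf
      have h2 : c ^ (i + 1) * c ^ (j + 1) ≤ (m ⊔ a) * (m ⊔ b) := by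
        calc c ^ (i + 1) * c ^ (j + 1) ≤ c ^ (j + 1) * (m ⊔ a) := by
              rw [mul_comm]; exact my_mul_mono _ hi
          _ = (m ⊔ a) * c ^ (j + 1) := mul_comm _ _
          _ ≤ (m ⊔ a) * (m ⊔ b) := my_mul_mono _ hj
      have h3 : (m ⊔ a) * (m ⊔ b) ≤ m := by
        rw [my_mul_sup, mul_comm (m ⊔ a) m, my_mul_sup, mul_comm (m ⊔ a) b, my_mul_sup]
        apply sup_le
        · exact sup_le (my_mul_le_left _ _) (my_mul_le_left _ _)
        · exact sup_le (my_mul_le_right _ _) (by rw [mul_comm]; exact hab)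
      calc c ^ (i + j + 1 + 1) = c ^ (i + 1) * c ^ (j + 1) := by
            rw [← pow_add]; ring_nf
        _ ≤ m := h2.trans h3

end Proof

theorem stmt19 {A : Type*} [CommQuantale A]
    (hcoh : Coherent A)
    (hPP : ∀ c : A, IsCompactElement c → CommQuantale.IsComplemented (perp c)) :
    rad (⊥ : A) = ⊥ := by 
  apply le_antisymm _ bot_le
  have halg := hcoh.1 (rad (⊥ : A))
  rw [halg]
  apply _root_.sSup_le
  rintro c ⟨hc, hcr⟩
  suffices h : c = ⊥ by rw [h]
  by_cases hnil : ∃ n : ℕ, c ^ (n + 1) = ⊥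
  · obtain ⟨n, hn⟩ := hnil
    exact my_nilp hcoh hPP n c hc hn
  · push_neg at hnil
    obtain ⟨p, hp, hcp⟩ := my_exists_mprime hcoh hc hnil
    exact absurd (hcr.trans (sInf_le ⟨hp, bot_le⟩)) hcp
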